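/- arXiv:1407.6046 — 4 statements merged into one kernel-verified Lean document; each statement's English description precedes it below -/
import Mathlib

section
/- Let G be a finite abelian group with n elementary divisors (i.e., G is isomorphic to a direct sum of n nontrivial cyclic groups of prime power order). Then for every faithful action of G on a finite set S, the base size of the action is at most n. -/
/-- A base for the action of `G` on `S`: a set whose pointwise stabilizer is trivial. -/
def IsBase (G : Type*) {S : Type*} [Group G] [MulAction G S] (B : Set S) : Prop :=
  ∀ g : G, (∀ x ∈ B, g • x = x) → g = 1

/-- The base size: minimal cardinality of a base. -/
noncomputable def baseSize (G S : Type*) [Group G] [MulAction G S] : ℕ :=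
  sInf {n | ∃ B : Finset S, IsBase G (B : Set S) ∧ B.card = n}

/-!
If `N` is a subgroup containing every element of prime order, a faithful action of a finite
group has a base with at most `Ω |N|` points, by a greedy choice: while the pointwise stabilizer
`H` of the chosen points is nontrivial, it contains an element of prime order, which moves some
point `x`; then `H_x ⊓ N` is a proper subgroup of `H ⊓ N`, so the number of prime factors of its
order drops. For `G ≅ ∏ i, ℤ/p_i^{α_i}` take for `N` the elements killed by `p_i` in the `i`-th
coordinate: `|N|` divides `∏ i, p_i`, which has `n` prime factors.
-/

open ArithmeticFunction MulAction
open scoped ArithmeticFunction.Omega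

namespace ArithmeticFunction

theorem cardFactors_le_of_dvd {a b : ℕ} (h : a ∣ b) (hb : b ≠ 0) : Ω a ≤ Ω b := by
  simpa only [cardFactors_apply] using (Nat.primeFactorsList_sublist_of_dvd h hb).length_le

theorem cardFactors_lt_of_dvd_of_ne {a b : ℕ} (h : a ∣ b) (hne : a ≠ b) (hb : b ≠ 0) :
    Ω a < Ω b := by
  obtain ⟨c, rfl⟩ := h
  have hc : 1 < c :=
    Nat.one_lt_iff_ne_zero_and_ne_one.mpr ⟨right_ne_zero_of_mul hb, by rintro rfl; simp at hne⟩
  rw [cardFactors_mul (left_ne_zero_of_mul hb) (right_ne_zero_of_mul hb)]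
  have := cardFactors_pos_iff_one_lt.mpr hc
  omega

theorem cardFactors_prod_of_prime {ι : Type*} {s : Finset ι} {p : ι → ℕ}
    (hp : ∀ i ∈ s, (p i).Prime) : Ω (∏ i ∈ s, p i) = s.card := by
  classical
  induction s using Finset.induction_on with
  | empty => simp
  | insert i s hi ih =>
    rw [Finset.prod_insert hi, cardFactors_mul (hp i (by simp)).ne_zero
      (Finset.prod_ne_zero_iff.mpr fun j hj => (hp j (by simp [hj])).ne_zero),
      cardFactors_apply_prime (hp i (by simp)), ih fun j hj => hp j (by simp [hj]),
      Finset.card_insert_of_notMem hi, add_comm]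

end ArithmeticFunction

namespace Subgroup

variable {G : Type*} [Group G]

theorem cardFactors_card_lt_of_lt [Finite G] {H K : Subgroup G} (h : H < K) :
    Ω (Nat.card H) < Ω (Nat.card K) :=
  cardFactors_lt_of_dvd_of_ne (card_dvd_of_le h.le)
    (fun hcard => h.ne (eq_of_le_of_card_ge h.le hcard.ge)) Nat.card_pos.ne'

theorem exists_mem_orderOf_prime [Finite G] {H : Subgroup G} (hH : H ≠ ⊥) :
    ∃ g ∈ H, (orderOf g).Prime := by
  obtain ⟨⟨g, hgH⟩, hg⟩ := ne_bot_iff_exists_ne_one.mp hH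
  have hg1 : orderOf g ≠ 1 := by simpa using hg
  have hq := Nat.minFac_prime hg1
  refine ⟨g ^ (orderOf g / (orderOf g).minFac), pow_mem hgH _, ?_⟩
  rwa [orderOf_pow_orderOf_div (orderOf_pos g).ne' (Nat.minFac_dvd _)]

end Subgroup

section Base

variable {G S : Type*} [Group G] [MulAction G S]

theorem isBase_iff_fixingSubgroup_eq_bot {B : Set S} : IsBase G B ↔ fixingSubgroup G B = ⊥ := by
  simp [IsBase, Subgroup.eq_bot_iff_forall, mem_fixingSubgroup_iff]

theorem baseSize_le_card {B : Finset S} (hB : IsBase G (B : Set S)) : baseSize G S ≤ B.card :=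
  Nat.sInf_le ⟨B, hB, rfl⟩

theorem fixingSubgroup_insert (x : S) (B : Set S) :
    fixingSubgroup G (insert x B) = stabilizer G x ⊓ fixingSubgroup G B := by
  ext g
  simp [mem_fixingSubgroup_iff]

theorem exists_finset_card_le_inf_fixingSubgroup_eq_bot (μ : Subgroup G → ℕ)
    (hμ : ∀ H : Subgroup G, H ≠ ⊥ → ∃ x : S, μ (H ⊓ stabilizer G x) < μ H) (H : Subgroup G) :
    ∃ B : Finset S, B.card ≤ μ H ∧ H ⊓ fixingSubgroup G (B : Set S) = ⊥ := by
  classical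
  induction hk : μ H using Nat.strong_induction_on generalizing H with
  | _ k ih =>
  rcases eq_or_ne H ⊥ with rfl | hH
  · exact ⟨∅, by simp⟩
  obtain ⟨x, hx⟩ := hμ H hH
  obtain ⟨B, hBcard, hB⟩ := ih _ (hk ▸ hx) _ rfl
  refine ⟨insert x B, (Finset.card_insert_le x B).trans (by omega), ?_⟩
  rwa [Finset.coe_insert, fixingSubgroup_insert, ← inf_assoc]

theorem exists_isBase_card_le_cardFactors [Finite G] [FaithfulSMul G S] (N : Subgroup G)
    (hN : ∀ g : G, (orderOf g).Prime → g ∈ N) :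
    ∃ B : Finset S, IsBase G (B : Set S) ∧ B.card ≤ Ω (Nat.card N) := by
  have hμ (H : Subgroup G) (hH : H ≠ ⊥) :
      ∃ x : S, Ω (Nat.card ↥(H ⊓ stabilizer G x ⊓ N)) < Ω (Nat.card ↥(H ⊓ N)) := by
    obtain ⟨g, hgH, hg⟩ := H.exists_mem_orderOf_prime hH
    obtain ⟨x, hx⟩ : ∃ x : S, g • x ≠ x := by
      by_contra! hfix
      refine hg.ne_one (orderOf_eq_one_iff.mpr (eq_of_smul_eq_smul (α := S) fun x => ?_))
      rw [hfix x, one_smul]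
    refine ⟨x, Subgroup.cardFactors_card_lt_of_lt (lt_of_le_of_ne ?_ fun h => hx ?_)⟩
    · exact inf_le_inf_right _ inf_le_left
    · have : g ∈ H ⊓ stabilizer G x ⊓ N := h ▸ ⟨hgH, hN g hg⟩
      exact this.1.2
  obtain ⟨B, hB, hfix⟩ :=
    exists_finset_card_le_inf_fixingSubgroup_eq_bot (fun H => Ω (Nat.card ↥(H ⊓ N))) hμ ⊤
  exact ⟨B, isBase_iff_fixingSubgroup_eq_bot.mpr (by simpa using hfix), by simpa using hB⟩

end Base

theorem IsPGroup.pow_eq_one_of_pow_prime_eq_one {G : Type*} [Group G] {p q : ℕ}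
    (hG : IsPGroup p G) (hp : p.Prime) (hq : q.Prime) {x : G} (hx : x ^ q = 1) : x ^ p = 1 := by
  obtain ⟨k, hk⟩ := hG x
  rcases eq_or_ne q p with rfl | hqp
  · exact hx
  have hcop : q.Coprime (p ^ k) := ((Nat.coprime_primes hq hp).mpr hqp).pow_right k
  have hx1 : x = 1 := by simpa [hcop] using pow_gcd_eq_one.mpr ⟨hx, hk⟩
  rw [hx1, one_pow]

section PrimePowerCyclic

variable {ι : Type*} {C : ι → Type*} [∀ i, CommGroup (C i)] (p : ι → ℕ)

theorem card_pi_ker_powMonoidHom_dvd [Fintype ι] [∀ i, IsCyclic (C i)] [∀ i, Finite (C i)] :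
    Nat.card (Subgroup.pi Set.univ fun i => (powMonoidHom (p i) : C i →* C i).ker) ∣ ∏ i, p i := by
  refine (dvd_of_eq ((Nat.card_congr (Equiv.Set.univPi _)).trans Nat.card_pi)).trans <|
    Finset.prod_dvd_prod_of_dvd _ _ fun i _ => ?_
  exact (dvd_of_eq (IsCyclic.card_powMonoidHom_ker (G := C i) (p i))).trans
    (Nat.gcd_dvd_right _ _)

theorem mem_pi_ker_powMonoidHom_of_orderOf_prime (hp : ∀ i, (p i).Prime)
    (hC : ∀ i, IsPGroup (p i) (C i)) {v : ∀ i, C i} (hv : (orderOf v).Prime) :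
    v ∈ Subgroup.pi Set.univ fun i => (powMonoidHom (p i) : C i →* C i).ker := fun i _ =>
  (hC i).pow_eq_one_of_pow_prime_eq_one (hp i) hv (congrFun (pow_orderOf_eq_one v) i)

end PrimePowerCyclic

theorem stmt6_general (G S : Type*) [CommGroup G] [Fintype G] [MulAction G S]
    [FaithfulSMul G S] (n : ℕ) (p α : Fin n → ℕ) (hp : ∀ i, (p i).Prime)
    (e : G ≃* ((i : Fin n) → Multiplicative (ZMod (p i ^ α i)))) :
    baseSize G S ≤ n := by
  have : ∀ i, NeZero (p i ^ α i) := fun i => ⟨pow_ne_zero _ (hp i).ne_zero⟩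
  set N := Subgroup.pi Set.univ fun i =>
    (powMonoidHom (p i) : Multiplicative (ZMod (p i ^ α i)) →* _).ker
  have hpgroup (i : Fin n) : IsPGroup (p i) (Multiplicative (ZMod (p i ^ α i))) :=
    IsPGroup.of_card (n := α i) (by simp)
  have hN (g : G) (hg : (orderOf g).Prime) : g ∈ N.comap e.toMonoidHom :=
    mem_pi_ker_powMonoidHom_of_orderOf_prime p hp hpgroup
      (by rwa [orderOf_injective _ e.injective])
  obtain ⟨B, hB, hBcard⟩ := exists_isBase_card_le_cardFactors (S := S) _ hN
  calc baseSize G S ≤ B.card := baseSize_le_card hB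
    _ ≤ Ω (Nat.card (N.comap e.toMonoidHom)) := hBcard
    _ ≤ Ω (∏ i, p i) := cardFactors_le_of_dvd
        ((Subgroup.card_comap_dvd_of_injective _ _ e.injective).trans
          (card_pi_ker_powMonoidHom_dvd p))
        (Finset.prod_ne_zero_iff.mpr fun i _ => (hp i).ne_zero)
    _ = n := by rw [cardFactors_prod_of_prime fun i _ => hp i, Finset.card_univ, Fintype.card_fin]

/-- If `G` is a finite abelian group with `n` elementary divisors, i.e. `G` is isomorphic
to a direct sum of `n` nontrivial cyclic groups of prime power orders `p i ^ α i`, then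
every faithful action of `G` on a finite set `S` has base size at most `n`. -/
theorem stmt6 (G S : Type*) [CommGroup G] [Fintype G] [Fintype S] [MulAction G S]
    [FaithfulSMul G S] (n : ℕ) (p α : Fin n → ℕ) (hp : ∀ i, (p i).Prime)
    (hα : ∀ i, 1 ≤ α i)
    (e : G ≃* ((i : Fin n) → Multiplicative (ZMod (p i ^ α i)))) :
    baseSize G S ≤ n :=
  stmt6_general G S n p α hp e
end

section
/- Let p and q be distinct odd primes. Consider the subgroup G of Sym({1,...,p+q}) generated by r = (1 2 ... p)(p+1 p+2 ... p+q) and an involution f that fixes p and p+q and satisfies f r f = r⁻¹. Then G is isomorphic to the dihedral group of order 2pq and the base size of its natural action on {1,...,p+q} is exactly 3. -/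
/-!
`r` has order `pq`, its two cycles having coprime lengths, and `f` inverts `r` without lying
in `⟨r⟩` (whose order `pq` is odd), so `⟨r, f⟩` is dihedral of order `2pq`; in particular each
element is a power of `r` or inverts `r`.

The points `1, 2, p + 1` form a base: a power of `r` fixing `1` and `p + 1` is trivial, and an
element inverting `r` that fixes both `1` and `r 1 = 2` would make `r²` fix `1`, impossible
as `p > 2`. Two points never suffice: if both lie in one cycle, `r ^ p` or `r ^ q` fixes them;
if they lie in different cycles, the Chinese remainder theorem gives a power of `r` carrying
the fixed points `p`, `p + q` of `f` to them, and the corresponding conjugate of `f` fixes both.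
-/

noncomputable def permBaseSize {S : Type*} (G : Subgroup (Equiv.Perm S)) : ℕ :=
  sInf {n | ∃ B : Finset S,
    (∀ g ∈ G, (∀ x ∈ B, g x = x) → g = 1) ∧ B.card = n}

theorem Nat.add_one_mod_eq_ite (m : ℕ) {n : ℕ} (hn : 0 < n) :
    (m + 1) % n = if m % n = n - 1 then 0 else m % n + 1 := by
  rw [← Nat.mod_add_mod]
  split_ifs with h
  · rw [h, Nat.sub_add_cancel hn, Nat.mod_self]
  · exact Nat.mod_eq_of_lt (by have := Nat.mod_lt m hn; omega)

namespace DihedralGroup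

variable {G : Type*} [Group G] {n : ℕ} {a b : G}

theorem pow_val_add [NeZero n] (ha : a ^ n = 1) (i j : ZMod n) :
    a ^ (i + j).val = a ^ i.val * a ^ j.val := by
  rw [ZMod.val_add, ← pow_eq_pow_mod _ ha, pow_add]

theorem pow_val_neg [NeZero n] (ha : a ^ n = 1) (i : ZMod n) :
    a ^ (-i).val = (a ^ i.val)⁻¹ :=
  eq_inv_of_mul_eq_one_left <| by rw [← pow_val_add ha, neg_add_cancel, ZMod.val_zero, pow_zero]

theorem pow_val_natCast (ha : a ^ n = 1) (k : ℕ) : a ^ (k : ZMod n).val = a ^ k := by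
  rw [ZMod.val_natCast, ← pow_eq_pow_mod _ ha]

theorem mul_pow_mul_eq_inv (hb : b * b = 1) (hab : b * a * b = a⁻¹) (k : ℕ) :
    b * a ^ k * b = (a ^ k)⁻¹ := by
  have hconj : (b * a * b⁻¹) ^ k = b * a ^ k * b⁻¹ := conj_pow
  rwa [inv_eq_of_mul_eq_one_right hb, hab, inv_pow, eq_comm] at hconj

theorem pow_mul_eq_mul_inv (hb : b * b = 1) (hab : b * a * b = a⁻¹) (k : ℕ) :
    a ^ k * b = b * (a ^ k)⁻¹ := by
  rw [← mul_pow_mul_eq_inv hb hab, ← mul_assoc, ← mul_assoc, hb, one_mul]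

variable [NeZero n] (ha : a ^ n = 1) (hb : b * b = 1) (hab : b * a * b = a⁻¹)

def lift : DihedralGroup n →* G where
  toFun
    | r i => a ^ i.val
    | sr i => b * a ^ i.val
  map_one' := by simp only [one_def, ZMod.val_zero, pow_zero]
  map_mul' := by
    rintro (i | i) (j | j)
    · simp only [r_mul_r, pow_val_add ha]
    · simp only [r_mul_sr, sub_eq_neg_add, pow_val_add ha, pow_val_neg ha]
      rw [← mul_assoc, ← pow_mul_eq_mul_inv hb hab, mul_assoc]
    · simp only [sr_mul_r, pow_val_add ha, mul_assoc]
    · simp only [sr_mul_sr, sub_eq_neg_add, pow_val_add ha, pow_val_neg ha]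
      rw [← mul_pow_mul_eq_inv hb hab, mul_assoc, mul_assoc]

@[simp] theorem lift_r (i : ZMod n) : lift ha hb hab (r i) = a ^ i.val := rfl
@[simp] theorem lift_sr (i : ZMod n) : lift ha hb hab (sr i) = b * a ^ i.val := rfl

theorem range_lift : (lift ha hb hab).range = Subgroup.closure {a, b} := by
  apply le_antisymm
  · have ha' : a ∈ Subgroup.closure {a, b} := Subgroup.subset_closure (by simp)
    have hb' : b ∈ Subgroup.closure {a, b} := Subgroup.subset_closure (by simp)
    rintro _ ⟨i | i, rfl⟩
    · exact Subgroup.pow_mem _ ha' _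
    · exact Subgroup.mul_mem _ hb' (Subgroup.pow_mem _ ha' _)
  · rw [Subgroup.closure_le, Set.insert_subset_iff, Set.singleton_subset_iff]
    refine ⟨⟨r 1, ?_⟩, ⟨sr 0, ?_⟩⟩
    · rw [lift_r, ← Nat.cast_one, pow_val_natCast ha, pow_one]
    · rw [lift_sr, ZMod.val_zero, pow_zero, mul_one]

theorem lift_injective (ha' : orderOf a = n) (hb' : b ∉ Subgroup.zpowers a) :
    Function.Injective (lift ha hb hab) := by
  rw [injective_iff_map_eq_one]
  rintro (i | i) h
  · have hdvd : n ∣ i.val := ha'.symm.dvd.trans (orderOf_dvd_of_pow_eq_one h)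
    rw [(ZMod.val_eq_zero i).mp (Nat.eq_zero_of_dvd_of_lt hdvd (ZMod.val_lt i)), r_zero]
  · rw [lift_sr, mul_eq_one_iff_eq_inv] at h
    exact absurd (h ▸ Subgroup.inv_mem _ (Subgroup.npow_mem_zpowers a _)) hb'

include ha hb hab in
theorem exists_pow_eq_or_conj_eq_inv_of_mem_closure {g : G}
    (hg : g ∈ Subgroup.closure {a, b}) : (∃ k : ℕ, g = a ^ k) ∨ g * a * g⁻¹ = a⁻¹ := by
  rw [← range_lift ha hb hab] at hg
  obtain ⟨i | i, rfl⟩ := hg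
  · exact .inl ⟨i.val, rfl⟩
  · right
    calc lift ha hb hab (sr i) * a * (lift ha hb hab (sr i))⁻¹ = b * a * b⁻¹ := by
          rw [lift_sr]; group
      _ = a⁻¹ := by rw [inv_eq_of_mul_eq_one_right hb, hab]

end DihedralGroup

theorem DihedralGroup.nonempty_closure_mulEquiv {G : Type*} [Group G] {n : ℕ} [NeZero n]
    {a b : G}
    (ha : orderOf a = n) (hb : b * b = 1) (hab : b * a * b = a⁻¹)
    (hb' : b ∉ Subgroup.zpowers a) :
    Nonempty (Subgroup.closure {a, b} ≃* DihedralGroup n) := by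
  have ha' : a ^ n = 1 := ha ▸ pow_orderOf_eq_one a
  exact ⟨((MonoidHom.ofInjective (lift_injective ha' hb hab ha hb')).trans
    (MulEquiv.subgroupCongr (range_lift ha' hb hab))).symm⟩

theorem Equiv.Perm.apply_apply_eq_of_conj_eq_inv {α : Type*} {g σ : Equiv.Perm α}
    (h : g * σ * g⁻¹ = σ⁻¹) {x : α} (hx : g x = x) (hσx : g (σ x) = σ x) : σ (σ x) = x := by
  have : σ⁻¹ x = σ x := by
    rw [← h, Equiv.Perm.mul_apply, Equiv.Perm.mul_apply, Equiv.Perm.inv_eq_iff_eq.mpr hx.symm,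
      hσx]
  rw [← this, ← Equiv.Perm.mul_apply, mul_inv_cancel, Equiv.Perm.one_apply]

def IsPermBase {S : Type*} (G : Subgroup (Equiv.Perm S)) (B : Finset S) : Prop :=
  ∀ g ∈ G, (∀ x ∈ B, g x = x) → g = 1

theorem permBaseSize_eq {S : Type*} {G : Subgroup (Equiv.Perm S)} {m : ℕ}
    (hbase : ∃ B : Finset S, IsPermBase G B ∧ B.card = m)
    (hmin : ∀ B : Finset S, IsPermBase G B → m ≤ B.card) : permBaseSize G = m :=
  IsLeast.csInf_eq ⟨hbase, by rintro _ ⟨B, hB, rfl⟩; exact hmin B hB⟩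

/-- Point `i : Fin (p + q)` stands for `i + 1`, so `r` is `(1 2 … p)(p+1 … p+q)`. -/
def IsRotationPair (p q : ℕ) (r : Equiv.Perm (Fin (p + q))) : Prop :=
  ∀ i : Fin (p + q), (r i).val =
    if i.val = p - 1 then 0 else if i.val = p + q - 1 then p else i.val + 1

namespace IsRotationPair

variable {p q : ℕ} {r : Equiv.Perm (Fin (p + q))} (hr : IsRotationPair p q r)
include hr

theorem val_pow_apply_of_lt (k : ℕ) {i : Fin (p + q)} (hi : i.val < p) :
    ((r ^ k) i).val = (i.val + k) % p := by
  induction k with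
  | zero => exact (Nat.mod_eq_of_lt hi).symm
  | succ k ih =>
    have hlt : (i.val + k) % p < p := Nat.mod_lt _ (by omega)
    rw [pow_succ', Equiv.Perm.mul_apply, hr, ih, ← Nat.add_assoc,
      Nat.add_one_mod_eq_ite _ (by omega)]
    split_ifs <;> omega

theorem val_pow_apply_of_le (hp : 0 < p) (k : ℕ) {i : Fin (p + q)} (hi : p ≤ i.val) :
    ((r ^ k) i).val = p + (i.val - p + k) % q := by
  have hiq := i.isLt
  induction k with
  | zero => rw [pow_zero, Equiv.Perm.one_apply, Nat.add_zero, Nat.mod_eq_of_lt (by omega)]; omega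
  | succ k ih =>
    have hlt : (i.val - p + k) % q < q := Nat.mod_lt _ (by omega)
    rw [pow_succ', Equiv.Perm.mul_apply, hr, ih, ← Nat.add_assoc,
      Nat.add_one_mod_eq_ite _ (by omega)]
    split_ifs <;> omega

theorem pow_apply_eq_self_iff_of_lt {k : ℕ} {i : Fin (p + q)} (hi : i.val < p) :
    (r ^ k) i = i ↔ p ∣ k := by
  rw [Fin.ext_iff, hr.val_pow_apply_of_lt k hi, ← Nat.add_modEq_left_iff, Nat.ModEq,
    Nat.mod_eq_of_lt hi]

theorem pow_apply_eq_self_iff_of_le (hp : 0 < p) {k : ℕ} {i : Fin (p + q)} (hi : p ≤ i.val) :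
    (r ^ k) i = i ↔ q ∣ k := by
  have hiq : i.val - p < q := by have := i.isLt; omega
  rw [Fin.ext_iff, hr.val_pow_apply_of_le hp k hi, ← Nat.add_modEq_left_iff, Nat.ModEq,
    Nat.mod_eq_of_lt hiq]
  omega

theorem pow_eq_one_iff (hp : 0 < p) (hq : 0 < q) {k : ℕ} : r ^ k = 1 ↔ p ∣ k ∧ q ∣ k := by
  constructor
  · intro h
    exact ⟨(hr.pow_apply_eq_self_iff_of_lt (i := ⟨0, by omega⟩) hp).mp (by rw [h]; rfl),
      (hr.pow_apply_eq_self_iff_of_le hp (i := ⟨p, by omega⟩) le_rfl).mp (by rw [h]; rfl)⟩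
  · rintro ⟨hpk, hqk⟩
    ext i
    rcases lt_or_ge i.val p with hi | hi
    · rw [(hr.pow_apply_eq_self_iff_of_lt hi).mpr hpk]; rfl
    · rw [(hr.pow_apply_eq_self_iff_of_le hp hi).mpr hqk]; rfl

theorem orderOf_eq_mul (hpq : p.Coprime q) (hp : 0 < p) (hq : 0 < q) : orderOf r = p * q :=
  Nat.dvd_right_iff_eq.mp fun k => by
    rw [orderOf_dvd_iff_pow_eq_one, hr.pow_eq_one_iff hp hq, ← Nat.lcm_dvd_iff, hpq.lcm_eq_mul]

theorem exists_pow_apply_eq_and_pow_apply_eq (hpq : p.Coprime q) {i j x y : Fin (p + q)}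
    (hi : i.val < p) (hy : y.val < p) (hj : p ≤ j.val) (hx : p ≤ x.val) :
    ∃ a : ℕ, (r ^ a) i = y ∧ (r ^ a) j = x := by
  obtain ⟨a, ha_p, ha_q⟩ :=
    Nat.chineseRemainder hpq (y.val + (p - i.val)) (x.val - p + (q - (j.val - p)))
  have hxq : x.val - p < q := by have := x.isLt; omega
  have hjq : j.val - p < q := by have := j.isLt; omega
  refine ⟨a, Fin.ext ?_, Fin.ext ?_⟩
  · rw [hr.val_pow_apply_of_lt a hi, ha_p.add_left i,
      show i.val + (y.val + (p - i.val)) = y.val + p by omega, Nat.add_mod_right,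
      Nat.mod_eq_of_lt hy]
  · rw [hr.val_pow_apply_of_le (by omega) a hj, ha_q.add_left _,
      show j.val - p + (x.val - p + (q - (j.val - p))) = x.val - p + q by omega,
      Nat.add_mod_right, Nat.mod_eq_of_lt hxq]
    omega

theorem isPermBase_of_forall_pow_or_conj_eq_inv (hp : 2 < p) (hq : 0 < q)
    {G : Subgroup (Equiv.Perm (Fin (p + q)))}
    (hG : ∀ g ∈ G, (∃ k : ℕ, g = r ^ k) ∨ g * r * g⁻¹ = r⁻¹) :
    IsPermBase G {⟨0, by omega⟩, ⟨1, by omega⟩, ⟨p, by omega⟩} := by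
  intro g hg hfix
  have h0 : g ⟨0, by omega⟩ = ⟨0, by omega⟩ := hfix _ (by simp)
  have h1 : g ⟨1, by omega⟩ = ⟨1, by omega⟩ := hfix _ (by simp)
  have hp' : g ⟨p, by omega⟩ = ⟨p, by omega⟩ := hfix _ (by simp)
  rcases hG g hg with ⟨k, rfl⟩ | hinv
  · exact (hr.pow_eq_one_iff (by omega) hq).mpr
      ⟨(hr.pow_apply_eq_self_iff_of_lt (by simp; omega)).mp h0,
        (hr.pow_apply_eq_self_iff_of_le (by omega) le_rfl).mp hp'⟩
  · have hr0 : r ⟨0, by omega⟩ = ⟨1, by omega⟩ := by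
      ext; rw [hr]; simp only; split_ifs <;> omega
    have hrr := Equiv.Perm.apply_apply_eq_of_conj_eq_inv hinv h0 (hr0 ▸ h1)
    rw [← Equiv.Perm.mul_apply, ← sq, hr.pow_apply_eq_self_iff_of_lt (by simp; omega)] at hrr
    exact absurd (Nat.le_of_dvd two_pos hrr) (by omega)

theorem three_le_card_of_isPermBase (hpq : p.Coprime q) (hp : 1 < p) (hq : 1 < q)
    {G : Subgroup (Equiv.Perm (Fin (p + q)))} {f : Equiv.Perm (Fin (p + q))}
    (hrG : r ∈ G) (hfG : f ∈ G) (hf : f ≠ 1)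
    (hfixp : ∀ i : Fin (p + q), i.val = p - 1 → f i = i)
    (hfixq : ∀ i : Fin (p + q), i.val = p + q - 1 → f i = i)
    {B : Finset (Fin (p + q))} (hB : IsPermBase G B) : 3 ≤ B.card := by
  by_contra! hcard
  by_cases hlow : ∀ z ∈ B, z.val < p
  · have hrp := hB _ (G.pow_mem hrG p) fun z hz =>
      (hr.pow_apply_eq_self_iff_of_lt (hlow z hz)).mpr dvd_rfl
    exact hq.ne' (hpq.symm.eq_one_of_dvd ((hr.pow_eq_one_iff (by omega) (by omega)).mp hrp).2)
  by_cases hhigh : ∀ z ∈ B, p ≤ z.val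
  · have hrq := hB _ (G.pow_mem hrG q) fun z hz =>
      (hr.pow_apply_eq_self_iff_of_le (by omega) (hhigh z hz)).mpr dvd_rfl
    exact hp.ne' (hpq.eq_one_of_dvd ((hr.pow_eq_one_iff (by omega) (by omega)).mp hrq).1)
  push Not at hlow hhigh
  obtain ⟨x, hxB, hx⟩ := hlow
  obtain ⟨y, hyB, hy⟩ := hhigh
  have hBxy : B = {x, y} := by
    refine (Finset.eq_of_subset_of_card_le ?_ ?_).symm
    · exact Finset.insert_subset hxB (Finset.singleton_subset_iff.mpr hyB)
    · rw [Finset.card_pair (by rintro rfl; omega)]; omega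
  obtain ⟨a, hay, hax⟩ := hr.exists_pow_apply_eq_and_pow_apply_eq hpq
    (i := ⟨p - 1, by omega⟩) (j := ⟨p + q - 1, by omega⟩) (by simp; omega) hy (by simp; omega) hx
  have hconj_fix : ∀ u, f u = u → (r ^ a * f * (r ^ a)⁻¹) ((r ^ a) u) = (r ^ a) u := by
    intro u hu
    simp [Equiv.Perm.mul_apply, hu]
  -- Conjugating `f` by `r ^ a` moves its fixed points `p - 1`, `p + q - 1` to `y`, `x`.
  apply hf
  refine conj_eq_one_iff.mp (hB _ (G.mul_mem (G.mul_mem (G.pow_mem hrG a) hfG)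
    (G.inv_mem (G.pow_mem hrG a))) ?_)
  rw [hBxy, ← hax, ← hay]
  simp only [Finset.mem_insert, Finset.mem_singleton, forall_eq_or_imp, forall_eq]
  exact ⟨hconj_fix _ (hfixq _ rfl), hconj_fix _ (hfixp _ rfl)⟩

end IsRotationPair

/-- Let `p ≠ q` be odd primes.  Working with `Fin (p + q)` as the set `{1, …, p + q}`
(index `i` standing for the point `i + 1`), let `r` be the permutation
`(1 2 … p)(p+1 … p+q)` and let `f` be an involution fixing `p` and `p + q` with
`f * r * f = r⁻¹`.  Then the subgroup generated by `r` and `f` is isomorphic to the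
dihedral group of order `2pq`, and the base size of its natural action is exactly `3`. -/
theorem stmt11 (p q : ℕ) (hp : p.Prime) (hq : q.Prime) (hop : Odd p) (hoq : Odd q)
    (hpq : p ≠ q) (r f : Equiv.Perm (Fin (p + q)))
    (hr : ∀ i : Fin (p + q), (r i).val =
      if i.val = p - 1 then 0 else if i.val = p + q - 1 then p else i.val + 1)
    (hf2 : orderOf f = 2)
    (hfixp : ∀ i : Fin (p + q), i.val = p - 1 → f i = i)
    (hfixq : ∀ i : Fin (p + q), i.val = p + q - 1 → f i = i)
    (hconj : f * r * f = r⁻¹) :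
    Nonempty (Subgroup.closure {r, f} ≃* DihedralGroup (p * q)) ∧
      permBaseSize (Subgroup.closure {r, f}) = 3 := by
  have hr : IsRotationPair p q r := hr
  have hp3 : 3 ≤ p := by have := hp.two_le; obtain ⟨m, rfl⟩ := hop; omega
  have hq3 : 3 ≤ q := by have := hq.two_le; obtain ⟨m, rfl⟩ := hoq; omega
  have hcop : p.Coprime q := (Nat.coprime_primes hp hq).mpr hpq
  have horder : orderOf r = p * q := hr.orderOf_eq_mul hcop (by omega) (by omega)
  have hrpq : r ^ (p * q) = 1 := horder ▸ pow_orderOf_eq_one r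
  have hff : f * f = 1 := by rw [← sq, ← hf2, pow_orderOf_eq_one]
  have hf_notMem : f ∉ Subgroup.zpowers r := fun h => by
    have h2 : 2 ∣ p * q := hf2 ▸ horder ▸ orderOf_dvd_of_mem_zpowers h
    exact Nat.not_even_iff_odd.mpr (hop.mul hoq) (even_iff_two_dvd.mpr h2)
  have : NeZero (p * q) := ⟨by positivity⟩
  have hG : ∀ g ∈ Subgroup.closure {r, f}, (∃ k : ℕ, g = r ^ k) ∨ g * r * g⁻¹ = r⁻¹ :=
    fun g hg => DihedralGroup.exists_pow_eq_or_conj_eq_inv_of_mem_closure hrpq hff hconj hg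
  refine ⟨DihedralGroup.nonempty_closure_mulEquiv horder hff hconj hf_notMem,
    permBaseSize_eq ⟨_, hr.isPermBase_of_forall_pow_or_conj_eq_inv (by omega) (by omega) hG, ?_⟩
      fun B hB => ?_⟩
  · exact Finset.card_eq_three.mpr ⟨_, _, _, by simp, by simp; omega, by simp; omega, rfl⟩
  · exact hr.three_le_card_of_isPermBase hcop (by omega) (by omega)
      (Subgroup.subset_closure (by simp)) (Subgroup.subset_closure (by simp))
      (fun h => by simp [h] at hf2) hfixp hfixq hB
end

section
/- Let G be a permutation group on a finite set, let f, r ∈ G with f of prime order and r of a different prime order, and suppose fr has order equal to the order of f. Then every cycle of r (equivalently, every ⟨r⟩-orbit of size > 1) contains a point moved by f. -/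
/-!
Suppose `f` fixes the whole `⟨r⟩`-orbit of `x`. Then `f * r` acts on that orbit exactly as `r`
does, so `(f * r) ^ n • x = r ^ n • x` for every `n`. Taking `n = orderOf f = orderOf (f * r)`
and `n = orderOf r`, the period of `x` under `r` divides two distinct primes, hence is `1`:
`x` is fixed by `r` and its orbit is a single point.
-/

namespace MulAction

variable {M G α : Type*}

theorem smul_eq_of_pow_smul_eq_of_coprime [Monoid M] [MulAction M α] {r : M} {x : α}
    {m n : ℕ} (hmn : m.Coprime n) (hm : r ^ m • x = x) (hn : r ^ n • x = x) : r • x = x := by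
  rw [pow_smul_eq_iff_period_dvd] at hm hn
  rw [← period_eq_one_iff, ← Nat.dvd_one, ← hmn]
  exact Nat.dvd_gcd hm hn

variable [Group G] [MulAction G α]

theorem mul_pow_smul_eq_pow_smul {f r : G} {x : α}
    (hf : orbit (Subgroup.zpowers r) x ⊆ fixedBy α f) (n : ℕ) :
    (f * r) ^ n • x = r ^ n • x := by
  induction n with
  | zero => simp
  | succ n ih =>
    have hmem : r ^ (n + 1) • x ∈ orbit (Subgroup.zpowers r) x :=
      ⟨⟨r ^ (n + 1), Subgroup.npow_mem_zpowers r (n + 1)⟩, rfl⟩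
    rw [pow_succ', mul_smul, ih, mul_smul, ← mul_smul r, ← pow_succ']
    exact hf hmem

theorem smul_eq_of_orbit_subset_fixedBy {f r : G} {x : α}
    (hf : orbit (Subgroup.zpowers r) x ⊆ fixedBy α f)
    (hcop : (orderOf (f * r)).Coprime (orderOf r)) : r • x = x := by
  refine smul_eq_of_pow_smul_eq_of_coprime hcop ?_ (by rw [pow_orderOf_eq_one, one_smul])
  rw [← mul_pow_smul_eq_pow_smul hf, pow_orderOf_eq_one, one_smul]

theorem card_orbit_zpowers_eq_one {r : G} {x : α} (hx : r • x = x) :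
    Nat.card (orbit (Subgroup.zpowers r) x) = 1 := by
  have hfix : x ∈ fixedPoints (Subgroup.zpowers r) α := by
    rintro ⟨_, j, rfl⟩
    exact mem_fixedBy_zpow hx j
  have : Subsingleton (orbit (Subgroup.zpowers r) x) :=
    (Set.subsingleton_coe _).2 (subsingleton_orbit_iff_mem_fixedPoints.2 hfix)
  exact Nat.card_of_subsingleton ⟨x, mem_orbit_self x⟩

end MulAction

open MulAction

theorem stmt14_general (S : Type*) (f r : Equiv.Perm S) (pf pr : ℕ)
    (hpf : pf.Prime) (hpr : pr.Prime) (hne : pf ≠ pr)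
    (hf : orderOf f = pf) (hr : orderOf r = pr)
    (hfr : orderOf (f * r) = orderOf f) :
    ∀ x : S, 1 < Nat.card (MulAction.orbit (Subgroup.zpowers r) x) →
      ∃ y ∈ MulAction.orbit (Subgroup.zpowers r) x, f y ≠ y := by
  intro x hx
  by_contra! hfix
  have hcop : (orderOf (f * r)).Coprime (orderOf r) := by
    rw [hfr, hf, hr]
    exact (Nat.coprime_primes hpf hpr).2 hne
  have hrx : r • x = x := smul_eq_of_orbit_subset_fixedBy hfix hcop
  exact hx.ne' (card_orbit_zpowers_eq_one hrx)

/-- Let `f, r` be permutations of a finite set with `f` of prime order `pf` and `r` of a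
different prime order `pr`, and suppose `f * r` has order equal to the order of `f`.
Then every cycle of `r` (every `⟨r⟩`-orbit of size `> 1`) contains a point moved by `f`. -/
theorem stmt14 (S : Type*) [Fintype S] (f r : Equiv.Perm S) (pf pr : ℕ)
    (hpf : pf.Prime) (hpr : pr.Prime) (hne : pf ≠ pr)
    (hf : orderOf f = pf) (hr : orderOf r = pr)
    (hfr : orderOf (f * r) = orderOf f) :
    ∀ x : S, 1 < Nat.card (MulAction.orbit (Subgroup.zpowers r) x) →
      ∃ y ∈ MulAction.orbit (Subgroup.zpowers r) x, f y ≠ y :=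
  stmt14_general S f r pf pr hpf hpr hne hf hr hfr
end

section
/- Let G act on a finite set S with a base {v₁, v₂, v₃} of size 3 and |G| = 2pq for distinct odd primes p < q. If no base of size less than 3 exists, then at least one G-orbit on S has size exactly q. -/
/-!
An element `g` of order `q` exists by Cauchy and moves some point `v` of the base, so the orbit of
`v` has size at least `q`. Minimality of the base forces every point stabilizer to have order
neither `1` (else `{v}` is a base) nor a prime (else it moves some base point `w`, and `{v, w}`
is a base). As `|G| = 2pq` has three prime factors, every orbit size is therefore `1` or a prime
divisor of `2pq`; the only one that is at least `q` is `q`.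
-/

open MulAction ArithmeticFunction
open scoped ArithmeticFunction.Omega

section Base

variable {G S : Type*} [Group G] [MulAction G S]

lemma isBase_singleton_iff {v : S} : IsBase G ({v} : Set S) ↔ stabilizer G v = ⊥ := by
  simp [IsBase, Subgroup.eq_bot_iff_forall, mem_stabilizer_iff]

lemma isBase_pair_iff {v w : S} :
    IsBase G ({v, w} : Set S) ↔ stabilizer G v ⊓ stabilizer G w = ⊥ := by
  simp [IsBase, Subgroup.eq_bot_iff_forall, mem_stabilizer_iff, and_imp]

lemma IsBase.exists_smul_ne {B : Set S} (hB : IsBase G B) {g : G} (hg : g ≠ 1) :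
    ∃ x ∈ B, g • x ≠ x := by
  by_contra! h
  exact hg (hB g h)

lemma card_orbit_mul_card_stabilizer (v : S) :
    Nat.card (orbit G v) * Nat.card (stabilizer G v) = Nat.card G := by
  rw [← Nat.card_prod]
  exact Nat.card_congr (orbitProdStabilizerEquivGroup G v)

lemma IsBase.exists_isBase_pair_of_card_stabilizer_prime {B : Set S} (hB : IsBase G B) {v : S}
    (hv : (Nat.card (stabilizer G v)).Prime) : ∃ w, IsBase G ({v, w} : Set S) := by
  have : Finite (stabilizer G v) := Nat.finite_of_card_ne_zero hv.ne_zero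
  obtain ⟨g, hg, hg1⟩ := (Subgroup.bot_or_exists_ne_one (stabilizer G v)).resolve_left
    ((Subgroup.one_lt_card_iff_ne_bot _).mp hv.one_lt)
  obtain ⟨w, -, hw⟩ := hB.exists_smul_ne hg1
  refine ⟨w, isBase_pair_iff.mpr ?_⟩
  have hle : stabilizer G v ⊓ stabilizer G w ≤ stabilizer G v := inf_le_left
  rcases hv.eq_one_or_self_of_dvd _ (Subgroup.card_dvd_of_le hle) with h | h
  · exact Subgroup.card_eq_one.mp h
  · have heq := Subgroup.eq_of_le_of_card_ge hle h.ge
    exact absurd (heq.ge hg).2 hw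

lemma two_le_cardFactors_card_stabilizer [Finite G] {B : Set S} (hB : IsBase G B)
    (hmin : ∀ B : Finset S, IsBase G (B : Set S) → 3 ≤ B.card) (v : S) :
    2 ≤ Ω (Nat.card (stabilizer G v)) := by
  classical
  by_contra! hlt
  interval_cases h : Ω (Nat.card (stabilizer G v))
  · have hbot : stabilizer G v = ⊥ := Subgroup.card_eq_one.mp <|
      (cardFactors_eq_zero_iff_eq_zero_or_one.mp h).resolve_left Nat.card_pos.ne'
    have := hmin {v} (by simpa [isBase_singleton_iff] using hbot)
    simp at this
  · obtain ⟨w, hw⟩ := hB.exists_isBase_pair_of_card_stabilizer_prime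
      (cardFactors_eq_one_iff_prime.mp h)
    have h3 := hmin {v, w} (by simpa using hw)
    have h2 := Finset.card_insert_le v {w}
    simp only [Finset.card_singleton] at h2
    omega

lemma le_card_orbit_of_orderOf_prime [Finite G] {g : G} {q : ℕ} (hq : q.Prime) (hg : orderOf g = q)
    {v : S} (hv : g • v ≠ v) : q ≤ Nat.card (orbit G v) := by
  have : Fact (Nat.card (Subgroup.zpowers g)).Prime := ⟨by rwa [Nat.card_zpowers, hg]⟩
  have hbot : stabilizer (Subgroup.zpowers g) v = ⊥ := by
    refine (Subgroup.eq_bot_or_eq_top_of_prime_card _).resolve_right fun htop => hv ?_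
    have hmem := htop ▸ Subgroup.mem_top (⟨g, Subgroup.mem_zpowers g⟩ : Subgroup.zpowers g)
    exact hmem
  have hcard := card_orbit_mul_card_stabilizer (G := Subgroup.zpowers g) v
  rw [hbot, Subgroup.card_bot, mul_one, Nat.card_zpowers, hg] at hcard
  rw [← hcard]
  exact Nat.card_mono (Set.finite_range fun g : G => g • v) (orbit_subgroup_subset _ v)

end Base

lemma eq_of_mul_eq_two_mul_mul {p q m s : ℕ} (hp : p.Prime) (hq : q.Prime) (hlt : p < q)
    (hms : m * s = 2 * p * q) (hs : 2 ≤ Ω s) (hm : q ≤ m) : m = q := by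
  have hm0 : m ≠ 0 := by omega
  have hs0 : s ≠ 0 := by rintro rfl; simp [hp.ne_zero, hq.ne_zero] at hms
  have hΩ : Ω m + Ω s = 3 := by
    rw [← cardFactors_mul hm0 hs0, hms, cardFactors_mul (Nat.mul_ne_zero two_ne_zero hp.ne_zero) hq.ne_zero,
      cardFactors_mul two_ne_zero hp.ne_zero, cardFactors_apply_prime Nat.prime_two,
      cardFactors_apply_prime hp, cardFactors_apply_prime hq]
  have hm1 : Ω m ≠ 0 := fun h => by
    rcases cardFactors_eq_zero_iff_eq_zero_or_one.mp h with h | h <;> linarith [hq.two_le]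
  have hmp : m.Prime := cardFactors_eq_one_iff_prime.mp (by omega)
  have hdvd : m ∣ 2 * p * q := ⟨s, hms.symm⟩
  rcases hmp.dvd_mul.mp hdvd with h | h
  · rcases hmp.dvd_mul.mp h with h | h
    · linarith [Nat.le_of_dvd two_pos h, hp.two_le]
    · linarith [(Nat.prime_dvd_prime_iff_eq hmp hp).mp h]
  · exact (Nat.prime_dvd_prime_iff_eq hmp hq).mp h

theorem stmt17_general (G S : Type*) [Group G] [MulAction G S]
    (p q : ℕ) (hp : p.Prime) (hq : q.Prime) (hlt : p < q)
    (hcard : Nat.card G = 2 * p * q)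
    (v₁ v₂ v₃ : S) (hB : IsBase G ({v₁, v₂, v₃} : Set S))
    (hmin : ∀ B : Finset S, IsBase G (B : Set S) → 3 ≤ B.card) :
    ∃ v : S, Nat.card (MulAction.orbit G v) = q := by
  have : Finite G := Nat.finite_of_card_ne_zero (by rw [hcard]; positivity [hp.pos, hq.pos])
  have : Fact q.Prime := ⟨hq⟩
  obtain ⟨g, hg⟩ := exists_prime_orderOf_dvd_card' q (hcard ▸ dvd_mul_left q _)
  obtain ⟨v, -, hv⟩ := hB.exists_smul_ne (g := g) (by rintro rfl; simp [hq.ne_one.symm] at hg)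
  refine ⟨v, eq_of_mul_eq_two_mul_mul hp hq hlt ?_ (two_le_cardFactors_card_stabilizer hB hmin v)
    (le_card_orbit_of_orderOf_prime hq hg hv)⟩
  rw [card_orbit_mul_card_stabilizer, hcard]

/-- Let `G` act on a finite set `S` with a base `{v₁, v₂, v₃}` of size `3`, where
`|G| = 2pq` for distinct odd primes `p < q`.  If no base of size less than `3` exists,
then some `G`-orbit on `S` has size exactly `q`. -/
theorem stmt17 (G S : Type*) [Group G] [Fintype G] [Fintype S] [DecidableEq S] [MulAction G S]
    (p q : ℕ) (hp : p.Prime) (hq : q.Prime) (hop : Odd p) (hoq : Odd q) (hlt : p < q)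
    (hcard : Nat.card G = 2 * p * q)
    (v₁ v₂ v₃ : S) (hB : IsBase G ({v₁, v₂, v₃} : Set S))
    (hcard3 : ({v₁, v₂, v₃} : Finset S).card = 3)
    (hmin : ∀ B : Finset S, IsBase G (B : Set S) → 3 ≤ B.card) :
    ∃ v : S, Nat.card (MulAction.orbit G v) = q :=
  stmt17_general G S p q hp hq hlt hcard v₁ v₂ v₃ hB hmin
end
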